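/- Every Fibonacci number F_n with n ≠ 3 (i.e., every Fibonacci number other than F_3 = 2) has at least one base-10 digit different from 2; equivalently, the only Fibonacci number that is a repdigit of 2's is 2 itself. -/
import Mathlib

lemma pow10_mod9 (k : ℕ) : 10 ^ k % 9 = 1 := by
  induction k with
  | zero => rfl
  | succ k ih => rw [pow_succ]; omega

lemma repunit_succ (k : ℕ) : (10 ^ (k + 1) - 1) / 9 = 10 * ((10 ^ k - 1) / 9) + 1 := by
  have h9 : 10 ^ k % 9 = 1 := pow10_mod9 k
  have h1 : 1 ≤ 10 ^ k := Nat.one_le_pow _ _ (by norm_num)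
  rw [pow_succ]
  omega

lemma repunit_mod4 (k : ℕ) (hk : 2 ≤ k) : (10 ^ k - 1) / 9 % 4 = 3 := by
  induction k with
  | zero => omega
  | succ k ih =>
    rcases Nat.lt_or_ge k 2 with hk2 | hk2
    · interval_cases k
      · omega
      · norm_num
    · have := ih hk2
      rw [repunit_succ]
      omega

lemma fib_period8 (n : ℕ) : Nat.fib n % 8 = Nat.fib (n + 12) % 8 ∧
    Nat.fib (n + 1) % 8 = Nat.fib (n + 13) % 8 := by
  induction n with
  | zero => norm_num [Nat.fib]
  | succ n ih =>
    obtain ⟨h1, h2⟩ := ih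
    refine ⟨h2, ?_⟩
    show Nat.fib (n + 2) % 8 = Nat.fib (n + 14) % 8
    have e1 : Nat.fib (n + 2) = Nat.fib n + Nat.fib (n + 1) := by
      rw [Nat.fib_add_two]
    have e2 : Nat.fib (n + 14) = Nat.fib (n + 12) + Nat.fib (n + 13) := by
      have := Nat.fib_add_two (n := n + 12)
      convert this using 2 <;> ring
    omega

lemma fib_mod8_ne_six (n : ℕ) : Nat.fib n % 8 ≠ 6 := by
  have key : ∀ q r, r < 12 → Nat.fib (12 * q + r) % 8 = Nat.fib r % 8 := by
    intro q
    induction q with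
    | zero => intro r _; norm_num
    | succ q ih =>
      intro r hr
      have := (fib_period8 (12 * q + r)).1
      have e : 12 * (q + 1) + r = 12 * q + r + 12 := by ring
      rw [e, ← this, ih r hr]
  have hr : n % 12 < 12 := Nat.mod_lt _ (by norm_num)
  have := key (n / 12) (n % 12) hr
  rw [Nat.div_add_mod] at this
  rw [this]
  interval_cases h : n % 12 <;> decide

theorem fib_repdigit_two_eq_two (n k : ℕ) (hk : 1 ≤ k)
    (h : Nat.fib n = 2 * ((10 ^ k - 1) / 9)) : Nat.fib n = 2 := by
  rcases Nat.lt_or_ge k 2 with hk2 | hk2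
  · interval_cases k
    norm_num at h
    exact h
  · exfalso
    have h4 := repunit_mod4 k hk2
    have h8 : Nat.fib n % 8 = 6 := by omega
    exact fib_mod8_ne_six n h8
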